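/- arXiv:math/0005083 — 5 statements merged into one kernel-verified Lean document; each statement's English description precedes it below -/
import Mathlib

section
/- Let E and Ê be finite-dimensional real vector spaces, Q : Ê → E a linear map, Δ̂ a fan in Ê and Δ a fan in E. Assume that the assignment σ̂ ↦ Q(σ̂) defines a bijection from Δ̂^max onto Δ^max and a bijection from Δ̂^(1) onto Δ^(1). Then for every maximal cone σ̂ ∈ Δ̂^max, setting σ = Q(σ̂), the set of cones {τ̂ ∈ Δ̂ : Q(τ̂) ⊆ σ} is exactly the set of faces of σ̂. -/
open scoped BigOperators

/-- The convex cone generated by a set `V`: all finite nonnegative linear combinations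
of elements of `V`. -/
def coneGen {E : Type*} [AddCommGroup E] [Module ℝ E] (V : Set E) : Set E :=
  {x | ∃ (n : ℕ) (c : Fin n → ℝ) (v : Fin n → E),
    (∀ i, 0 ≤ c i) ∧ (∀ i, v i ∈ V) ∧ x = ∑ i, c i • v i}

/-- A polyhedral cone is the convex cone generated by a finite set. -/
def IsPolyhedralCone {E : Type*} [AddCommGroup E] [Module ℝ E] (C : Set E) : Prop :=
  ∃ V : Set E, V.Finite ∧ C = coneGen V

/-- A cone `C` is salient if `x ∈ C` and `-x ∈ C` imply `x = 0`. -/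
def SalientCone {E : Type*} [AddCommGroup E] [Module ℝ E] (C : Set E) : Prop :=
  ∀ x ∈ C, -x ∈ C → x = 0

/-- A subset which is a convex cone: contains `0`, closed under addition and
nonnegative scalar multiplication. -/
def IsConeSet {E : Type*} [AddCommGroup E] [Module ℝ E] (C : Set E) : Prop :=
  (0 : E) ∈ C ∧ (∀ x ∈ C, ∀ y ∈ C, x + y ∈ C) ∧
    ∀ t : ℝ, 0 ≤ t → ∀ x ∈ C, t • x ∈ C

/-- A face of a convex cone `C` is a convex subcone which is an extreme subset of `C`. -/
def IsFaceOf {E : Type*} [AddCommGroup E] [Module ℝ E] (C F : Set E) : Prop :=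
  IsConeSet F ∧ IsExtreme ℝ C F

/-- A fan: a finite set of salient polyhedral cones, closed under taking faces, such that
the intersection of any two cones is a face of each of them. -/
def IsFan {E : Type*} [AddCommGroup E] [Module ℝ E] (Δ : Set (Set E)) : Prop :=
  Δ.Finite ∧ (∀ σ ∈ Δ, IsPolyhedralCone σ ∧ SalientCone σ) ∧
  (∀ σ ∈ Δ, ∀ F : Set E, IsFaceOf σ F → F ∈ Δ) ∧
  (∀ σ ∈ Δ, ∀ τ ∈ Δ, IsFaceOf σ (σ ∩ τ) ∧ IsFaceOf τ (σ ∩ τ))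

/-- The set of inclusion-maximal cones of a fan. -/
def maxCones {E : Type*} [AddCommGroup E] [Module ℝ E] (Δ : Set (Set E)) : Set (Set E) :=
  {σ | σ ∈ Δ ∧ ∀ τ ∈ Δ, σ ⊆ τ → σ = τ}

/-- A ray: the set of nonnegative multiples of a nonzero vector. -/
def IsRayCone {E : Type*} [AddCommGroup E] [Module ℝ E] (R : Set E) : Prop :=
  ∃ v : E, v ≠ 0 ∧ R = {x | ∃ t : ℝ, 0 ≤ t ∧ x = t • v}

/-- The set of rays (one-dimensional cones) of a fan. -/
def rayCones {E : Type*} [AddCommGroup E] [Module ℝ E] (Δ : Set (Set E)) : Set (Set E) :=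
  {ρ | ρ ∈ Δ ∧ IsRayCone ρ}

/-!
Every cone of a fan is generated by finitely many vectors spanning rays of the fan: generators
lying in the cone of the others can be dropped, and by salience each remaining one spans a face.
Let `τ̂ ∈ Δ̂` with `Q τ̂ ⊆ Q σ̂`. A ray `ρ̂` of `τ̂` maps to a ray of `Δ` inside `Q σ̂ ∈ Δ`, hence
to a face of `Q σ̂`. A face of a cone is generated by the generators it contains, so this face is
spanned by the image of a generator `u` of `σ̂`, i.e. it is the image of the ray `ℝ≥0 u ⊆ σ̂`;
injectivity on rays gives `ρ̂ = ℝ≥0 u ⊆ σ̂`. So `τ̂ ⊆ σ̂`, and a cone of `Δ̂` inside `σ̂` is a face.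
-/

open Submodule
open PointedCone (hull subset_hull)

section ToPointedCone

variable {E : Type*} [AddCommGroup E] [Module ℝ E]

theorem coneGen_eq_hull (V : Set E) : coneGen V = (hull ℝ V : Set E) := by
  ext x
  simp only [coneGen, Set.mem_ofPred_eq, SetLike.mem_coe, mem_span_set']
  constructor
  · rintro ⟨n, c, v, hc, hv, rfl⟩
    exact ⟨n, fun i => ⟨c i, hc i⟩, fun i => ⟨v i, hv i⟩, rfl⟩
  · rintro ⟨n, c, v, rfl⟩
    exact ⟨n, fun i => c i, fun i => v i, fun i => (c i).2, fun i => (v i).2, rfl⟩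

theorem coe_hull_singleton (v : E) :
    (hull ℝ {v} : Set E) = {x | ∃ t : ℝ, 0 ≤ t ∧ x = t • v} := by
  ext x
  simp only [SetLike.mem_coe, mem_span_singleton, Set.mem_ofPred_eq]
  constructor
  · rintro ⟨t, rfl⟩
    exact ⟨t, t.2, rfl⟩
  · rintro ⟨t, ht, rfl⟩
    exact ⟨⟨t, ht⟩, rfl⟩

theorem isRayCone_iff {ρ : Set E} : IsRayCone ρ ↔ ∃ v : E, v ≠ 0 ∧ ρ = hull ℝ {v} := by
  simp only [IsRayCone, coe_hull_singleton]

theorem isFaceOf_coe_iff {C F : PointedCone ℝ E} :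
    IsFaceOf (C : Set E) F ↔ PointedCone.IsFaceOf F C := by
  refine ⟨fun ⟨_, hext⟩ => .of_mem_of_add_mem_left hext.1 fun {x y} hx hy hxy => ?_,
    fun hF => ⟨⟨F.zero_mem, fun _ hx _ hy => F.add_mem hx hy, fun _ ht _ hx => F.smul_mem ht hx⟩,
      hF.isExtreme⟩⟩
  refine hext.left_mem_of_mem_openSegment hx hy (F.smul_mem (by norm_num : (0:ℝ) ≤ 1 / 2) hxy) ?_
  exact ⟨1 / 2, 1 / 2, by norm_num, by norm_num, by norm_num, (smul_add _ _ _).symm⟩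

theorem image_hull {Ehat : Type*} [AddCommGroup Ehat] [Module ℝ Ehat] (Q : Ehat →ₗ[ℝ] E)
    (s : Set Ehat) : Q '' (hull ℝ s : Set Ehat) = hull ℝ (Q '' s) := by
  rw [← PointedCone.coe_map, PointedCone.map, map_span]
  rfl

end ToPointedCone

section Cones

variable {E : Type*} [AddCommGroup E] [Module ℝ E]

theorem SalientCone.eq_zero_of_add_eq_zero {C : Set E} (hC : SalientCone C) {x y : E}
    (hx : x ∈ C) (hy : y ∈ C) (hxy : x + y = 0) : x = 0 :=
  hC x hx (neg_eq_of_add_eq_zero_right hxy ▸ hy)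

theorem isFaceOf_hull_singleton_of_notMem {v : E} {s : Set E}
    (hsal : SalientCone (hull ℝ (insert v s) : Set E)) (hv : v ∉ hull ℝ s) :
    (hull ℝ {v}).IsFaceOf (hull ℝ (insert v s)) := by
  set C := hull ℝ (insert v s)
  have hsC : hull ℝ s ≤ C := span_mono (Set.subset_insert v s)
  have hvC : v ∈ C := subset_span (Set.mem_insert v s)
  refine .of_mem_of_add_mem_left (span_mono (by simp)) fun {x y} hx hy hxy => ?_
  obtain ⟨a, x', hx', rfl⟩ := mem_span_insert.1 hx
  obtain ⟨b, y', hy', rfl⟩ := mem_span_insert.1 hy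
  obtain ⟨t, ht⟩ := mem_span_singleton.1 hxy
  have hsum : x' + y' = ((t : ℝ) - a - b) • v := by
    have : (t : ℝ) • v = (a : ℝ) • v + x' + ((b : ℝ) • v + y') := ht
    rw [sub_sub, sub_smul, this, add_smul]; abel
  -- A positive multiple would put `v` in `hull s`; otherwise salience forces `x' = 0`.
  rcases lt_or_ge ((a : ℝ) + b) t with hlt | hle
  · refine absurd ((hull ℝ s).smul_mem_iff (by linarith : (0 : ℝ) < t - a - b) |>.1 ?_) hv
    exact hsum ▸ add_mem hx' hy'
  · have hx'0 : x' = 0 := by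
      refine hsal.eq_zero_of_add_eq_zero (hsC hx')
        (C.add_mem (hsC hy') (C.smul_mem (by linarith : (0 : ℝ) ≤ a + b - t) hvC)) ?_
      rw [← add_assoc, hsum, ← add_smul, show (t : ℝ) - a - b + (a + b - t) = 0 by ring,
        zero_smul]
    rw [hx'0, add_zero]
    exact smul_mem _ a (subset_span rfl)

theorem exists_finset_hull_eq_forall_isFaceOf_hull_singleton (V : Finset E)
    (hsal : SalientCone (hull ℝ (V : Set E) : Set E)) :
    ∃ W : Finset E, hull ℝ (W : Set E) = hull ℝ V ∧
      ∀ w ∈ W, (hull ℝ {w}).IsFaceOf (hull ℝ V) := by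
  classical
  induction V using Finset.strongInduction with
  | _ V ih =>
    by_cases hfaces : ∀ v ∈ V, (hull ℝ {v}).IsFaceOf (hull ℝ V)
    · exact ⟨V, rfl, hfaces⟩
    push Not at hfaces
    obtain ⟨v, hv, hnot⟩ := hfaces
    have hinsert : insert v ((V.erase v : Finset E) : Set E) = V := by
      rw [← Finset.coe_insert, Finset.insert_erase hv]
    have hmem : v ∈ hull ℝ ((V.erase v : Finset E) : Set E) := by
      by_contra h
      rw [← hinsert] at hsal hnot
      exact hnot (isFaceOf_hull_singleton_of_notMem hsal h)
    have heq : hull ℝ ((V.erase v : Finset E) : Set E) = hull ℝ V := by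
      rw [← hinsert]
      exact (span_insert_eq_span hmem).symm
    obtain ⟨W, hW, hfaces⟩ := ih _ (Finset.erase_ssubset hv) (heq ▸ hsal)
    exact ⟨W, hW.trans heq, heq ▸ hfaces⟩

theorem hull_singleton_eq_of_mem {v w : E} (hv : v ≠ 0) (hvw : v ∈ hull ℝ {w}) :
    hull ℝ {v} = hull ℝ {w} := by
  obtain ⟨t, rfl⟩ := mem_span_singleton.1 hvw
  exact span_singleton_smul_eq (R := {c : ℝ // 0 ≤ c})
    (isUnit_iff_ne_zero.2 (left_ne_zero_of_smul hv)) w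

theorem PointedCone.IsFaceOf.eq_hull_inter {𝕜 M : Type*} [Field 𝕜] [LinearOrder 𝕜]
    [IsStrictOrderedRing 𝕜] [AddCommGroup M] [Module 𝕜 M] {F : PointedCone 𝕜 M} {s : Set M}
    (hF : F.IsFaceOf (hull 𝕜 s)) : F = hull 𝕜 (s ∩ F) := by
  refine le_antisymm (fun x hxF => ?_) (span_le.2 Set.inter_subset_right)
  induction hF.le hxF using span_induction with
  | mem x hx => exact subset_hull ⟨hx, hxF⟩
  | zero => exact zero_mem _
  | add x y hx hy ihx ihy =>
    obtain ⟨hxF, hyF⟩ := (hF.add_mem_iff_mem hx hy).1 hxF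
    exact add_mem (ihx hxF) (ihy hyF)
  | smul a x hx ih =>
    rcases a.2.eq_or_lt with ha | ha
    · simp [show a = 0 from Subtype.ext ha.symm]
    · exact Submodule.smul_mem _ a (ih ((F.smul_mem_iff ha).1 hxF))

end Cones

section Fans

variable {E : Type*} [AddCommGroup E] [Module ℝ E] {Δ : Set (Set E)}

theorem IsFan.isFaceOf_of_subset (hΔ : IsFan Δ) {σ τ : Set E} (hσ : σ ∈ Δ) (hτ : τ ∈ Δ)
    (hτσ : τ ⊆ σ) : IsFaceOf σ τ :=
  Set.inter_eq_self_of_subset_right hτσ ▸ (hΔ.2.2.2 σ hσ τ hτ).1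

theorem IsFan.exists_finset_hull_eq (hΔ : IsFan Δ) {σ : Set E} (hσ : σ ∈ Δ) :
    ∃ W : Finset E, (hull ℝ (W : Set E) : Set E) = σ ∧ ∀ w ∈ W, (hull ℝ {w} : Set E) ∈ Δ := by
  obtain ⟨⟨V, hV, rfl⟩, hsal⟩ := hΔ.2.1 _ hσ
  rw [coneGen_eq_hull, ← hV.coe_toFinset] at hsal hσ ⊢
  obtain ⟨W, hW, hfaces⟩ := exists_finset_hull_eq_forall_isFaceOf_hull_singleton _ hsal
  exact ⟨W, by rw [hW], fun w hw => hΔ.2.2.1 _ hσ _ (isFaceOf_coe_iff.2 (hfaces w hw))⟩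

end Fans

section Quotient

variable {E Ehat : Type*} [AddCommGroup E] [Module ℝ E] [AddCommGroup Ehat] [Module ℝ Ehat]
  (Q : Ehat →ₗ[ℝ] E) {Dhat : Set (Set Ehat)} {D : Set (Set E)}

theorem exists_mem_rayCones_image_eq (hDhat : IsFan Dhat) (hD : IsFan D) {σhat : Set Ehat}
    (hσhat : σhat ∈ Dhat) (hσ : Q '' σhat ∈ D) {ρ : Set E} (hρ : ρ ∈ rayCones D)
    (hρσ : ρ ⊆ Q '' σhat) : ∃ ρhat ∈ rayCones Dhat, ρhat ⊆ σhat ∧ Q '' ρhat = ρ := by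
  obtain ⟨W, rfl, hW⟩ := hDhat.exists_finset_hull_eq hσhat
  obtain ⟨hρD, w, hw, rfl⟩ := And.imp_right isRayCone_iff.1 hρ
  have hface : (hull ℝ {w}).IsFaceOf (hull ℝ (Q '' W)) := by
    rw [← isFaceOf_coe_iff, ← image_hull]
    exact hD.isFaceOf_of_subset hσ hρD hρσ
  obtain ⟨_, ⟨⟨u, hu, rfl⟩, hQu⟩, hQu0⟩ : ∃ x ∈ Q '' W ∩ hull ℝ {w}, x ≠ 0 := by
    by_contra! h
    exact hw (span_singleton_eq_bot.1 (hface.eq_hull_inter.trans (span_eq_bot.2 h)))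
  have hu0 : u ≠ 0 := fun h => hQu0 (by rw [h, map_zero])
  refine ⟨hull ℝ {u}, ⟨hW u hu, isRayCone_iff.2 ⟨u, hu0, rfl⟩⟩,
    span_mono (Set.singleton_subset_iff.2 hu), ?_⟩
  rw [image_hull, Set.image_singleton, hull_singleton_eq_of_mem hQu0 hQu]

theorem subset_of_image_subset_image (hDhat : IsFan Dhat) (hD : IsFan D)
    (hray : Set.BijOn (fun σ : Set Ehat => Q '' σ) (rayCones Dhat) (rayCones D))
    {σhat τhat : Set Ehat} (hσhat : σhat ∈ Dhat) (hσ : Q '' σhat ∈ D) (hτhat : τhat ∈ Dhat)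
    (hτσ : Q '' τhat ⊆ Q '' σhat) : τhat ⊆ σhat := by
  obtain ⟨V, rfl, -⟩ := hDhat.exists_finset_hull_eq hσhat
  obtain ⟨W, rfl, hW⟩ := hDhat.exists_finset_hull_eq hτhat
  refine span_le.2 fun v hv => ?_
  rcases eq_or_ne v 0 with rfl | hv0
  · exact zero_mem _
  have hρhat : (hull ℝ {v} : Set Ehat) ∈ rayCones Dhat :=
    ⟨hW v hv, isRayCone_iff.2 ⟨v, hv0, rfl⟩⟩
  obtain ⟨ρhat, hρhat', hρσ, hQρ⟩ :=
    exists_mem_rayCones_image_eq Q hDhat hD hσhat hσ (hray.mapsTo hρhat)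
      ((Set.image_mono (span_mono (Set.singleton_subset_iff.2 hv))).trans hτσ)
  rw [hray.injOn hρhat' hρhat hQρ] at hρσ
  exact hρσ (mem_span_singleton_self v)

end Quotient

theorem quotient_presentation_fan_chart_general
    {E Ehat : Type*} [AddCommGroup E] [Module ℝ E]
    [AddCommGroup Ehat] [Module ℝ Ehat]
    (Q : Ehat →ₗ[ℝ] E) (Dhat : Set (Set Ehat)) (D : Set (Set E))
    (hDhat : IsFan Dhat) (hD : IsFan D)
    (hmax : Set.BijOn (fun σ : Set Ehat => Q '' σ) (maxCones Dhat) (maxCones D))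
    (hray : Set.BijOn (fun σ : Set Ehat => Q '' σ) (rayCones Dhat) (rayCones D)) :
    ∀ σhat ∈ maxCones Dhat,
      {τ | τ ∈ Dhat ∧ Q '' τ ⊆ Q '' σhat} = {F : Set Ehat | IsFaceOf σhat F} := by
  intro σhat hσhat
  have hσ : Q '' σhat ∈ D := (hmax.mapsTo hσhat).1
  ext τhat
  constructor
  · rintro ⟨hτhat, hτσ⟩
    exact hDhat.isFaceOf_of_subset hσhat.1 hτhat
      (subset_of_image_subset_image Q hDhat hD hray hσhat.1 hσ hτhat hτσ)
  · intro hface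
    exact ⟨hDhat.2.2.1 _ hσhat.1 τhat hface, Set.image_mono hface.2.1⟩

/-- If `Q` induces bijections on maximal cones and on rays, then for each maximal
cone `σ̂` of `Δ̂`, the cones of `Δ̂` mapped into `σ = Q(σ̂)` are exactly the faces of `σ̂`. -/
theorem quotient_presentation_fan_chart
    {E Ehat : Type*} [AddCommGroup E] [Module ℝ E] [FiniteDimensional ℝ E]
    [AddCommGroup Ehat] [Module ℝ Ehat] [FiniteDimensional ℝ Ehat]
    (Q : Ehat →ₗ[ℝ] E) (Dhat : Set (Set Ehat)) (D : Set (Set E))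
    (hDhat : IsFan Dhat) (hD : IsFan D)
    (hmax : Set.BijOn (fun σ : Set Ehat => Q '' σ) (maxCones Dhat) (maxCones D))
    (hray : Set.BijOn (fun σ : Set Ehat => Q '' σ) (rayCones Dhat) (rayCones D)) :
    ∀ σhat ∈ maxCones Dhat,
      {τ | τ ∈ Dhat ∧ Q '' τ ⊆ Q '' σhat} = {F : Set Ehat | IsFaceOf σhat F} :=
  quotient_presentation_fan_chart_general Q Dhat D hDhat hD hmax hray
end

section
/- Let N and N̂ be finitely generated free ℤ-modules, Q : N̂ → N a ℤ-linear map, v ∈ N and v̂ ∈ N̂ primitive elements, and suppose Q(v̂) = c•v for some integer c > 0. Let Q* : Hom(N,ℤ) → Hom(N̂,ℤ) denote precomposition with Q. Then Q* maps the subgroup {f : f(v) = 0} into {g : g(v̂) = 0}, and the induced homomorphism Hom(N,ℤ)/{f : f(v) = 0} → Hom(N̂,ℤ)/{g : g(v̂) = 0} is an isomorphism if and only if c = 1, i.e. if and only if Q(v̂) is primitive. -/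
/-- An element of a free `ℤ`-module is primitive if it is nonzero and every equation
`v = c • u` forces `c = ±1`. -/
def IsPrimitive {N : Type*} [AddCommGroup N] [Module ℤ N] (v : N) : Prop :=
  v ≠ 0 ∧ ∀ (c : ℤ) (u : N), v = c • u → c = 1 ∨ c = -1

/-- A primitive element of a f.g. free ℤ-module admits a dual functional evaluating to 1. -/
lemma exists_dual_eq_one {N : Type*} [AddCommGroup N] [Module ℤ N]
    [Module.Free ℤ N] [Module.Finite ℤ N] {v : N}
    (hv : IsPrimitive v) :
    ∃ f : Module.Dual ℤ N, f v = 1 := by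
  classical
  set R : Ideal ℤ := LinearMap.range (Module.Dual.eval ℤ N v) with hRdef
  obtain ⟨g, hg⟩ := (inferInstance : R.IsPrincipal).principal
  have hdvd : ∀ f : Module.Dual ℤ N, g ∣ f v := by
    intro f
    have hm : f v ∈ R := ⟨f, rfl⟩
    rw [hg, Ideal.submodule_span_eq, Ideal.mem_span_singleton] at hm
    exact hm
  let b := Module.Free.chooseBasis ℤ N
  have hne : g ≠ 0 := by
    intro h0
    apply hv.1
    have hz : ∀ i, b.repr v i = 0 := by
      intro i
      have := hdvd (b.coord i)
      rw [h0] at this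
      simpa [Module.Basis.coord_apply] using this
    have : b.repr v = 0 := by ext i; simp [hz i]
    simpa using congrArg b.repr.symm this
  have hvu : v = g • (b.repr.symm ((b.repr v).mapRange (· / g) (Int.zero_ediv g))) := by
    set w := (b.repr v).mapRange (· / g) (Int.zero_ediv g) with hw
    have h1 : b.repr (g • (b.repr.symm w)) = b.repr v := by
      rw [map_zsmul, LinearEquiv.apply_symm_apply]
      ext i
      have h2 : (g • w) i = g • (w i) := map_zsmul (Finsupp.applyAddHom (M := ℤ) i) g w
      rw [h2, hw]
      simp only [Finsupp.mapRange_apply, zsmul_eq_mul]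
      exact Int.mul_ediv_cancel' (by simpa [Module.Basis.coord_apply] using hdvd (b.coord i))
    have h3 := congrArg b.repr.symm h1
    rw [LinearEquiv.symm_apply_apply, LinearEquiv.symm_apply_apply] at h3
    exact h3.symm
  have hgr : g ∈ R := by rw [hg]; exact Submodule.mem_span_singleton_self g
  obtain ⟨f, hf⟩ := hgr
  rcases hv.2 g _ hvu with h1 | h1
  · exact ⟨f, by rw [show f v = _ from hf, h1]⟩
  · exact ⟨-f, by rw [LinearMap.neg_apply, show f v = _ from hf, h1]; ring⟩

/-- For a lattice map `Q` with `Q v̂ = c • v` (`v`, `v̂` primitive, `c > 0`), the dual map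
`Q*` sends `{f | f v = 0}` into `{g | g v̂ = 0}`, and the induced map on the quotients
`Hom(N,ℤ)/v^⊥ → Hom(N̂,ℤ)/v̂^⊥` is bijective iff `c = 1`, i.e. iff `Q v̂` is primitive. -/
theorem dual_quotient_iso_iff_primitive {N Nhat : Type*}
    [AddCommGroup N] [Module ℤ N] [Module.Free ℤ N] [Module.Finite ℤ N]
    [AddCommGroup Nhat] [Module ℤ Nhat] [Module.Free ℤ Nhat] [Module.Finite ℤ Nhat]
    (Q : Nhat →ₗ[ℤ] N) (v : N) (vhat : Nhat)
    (hv : IsPrimitive v) (hvhat : IsPrimitive vhat)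
    (c : ℤ) (hc : 0 < c) (hQ : Q vhat = c • v) :
    ∃ h : LinearMap.ker (Module.Dual.eval ℤ N v) ≤
        Submodule.comap Q.dualMap (LinearMap.ker (Module.Dual.eval ℤ Nhat vhat)),
      (Function.Bijective
          (Submodule.mapQ (LinearMap.ker (Module.Dual.eval ℤ N v))
            (LinearMap.ker (Module.Dual.eval ℤ Nhat vhat)) Q.dualMap h) ↔ c = 1) ∧
      (c = 1 ↔ IsPrimitive (Q vhat)) := by
  obtain ⟨f₀, hf₀⟩ := exists_dual_eq_one hv
  obtain ⟨g₀, hg₀⟩ := exists_dual_eq_one hvhat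
  have h : LinearMap.ker (Module.Dual.eval ℤ N v) ≤
      Submodule.comap Q.dualMap (LinearMap.ker (Module.Dual.eval ℤ Nhat vhat)) := by
    intro f hf
    simp only [LinearMap.mem_ker, Module.Dual.eval_apply] at hf
    simp only [Submodule.mem_comap, LinearMap.mem_ker, Module.Dual.eval_apply,
      LinearMap.dualMap_apply, LinearMap.comp_apply, hQ, map_zsmul, hf, smul_zero]
  refine ⟨h, ?_, ?_⟩
  · constructor
    · intro hbij
      obtain ⟨x, hx⟩ := hbij.2 (Submodule.Quotient.mk g₀)
      obtain ⟨f, rfl⟩ := Submodule.Quotient.mk_surjective _ x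
      rw [Submodule.mapQ_apply, Submodule.Quotient.eq] at hx
      have h2 : f (Q vhat) - g₀ vhat = 0 := by
        have h2' : (Q.dualMap f - g₀) vhat = 0 := by
          simpa [LinearMap.mem_ker, Module.Dual.eval_apply] using hx
        simpa using h2'
      have h3 : f (Q vhat) = g₀ vhat := by linarith [h2]
      rw [hQ, hg₀, map_zsmul, zsmul_eq_mul, Int.cast_id] at h3
      exact Int.eq_one_of_mul_eq_one_right hc.le h3
    · rintro rfl
      rw [one_zsmul] at hQ
      constructor
      · refine LinearMap.ker_eq_bot.mp (LinearMap.ker_eq_bot'.mpr ?_)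
        intro x hx
        obtain ⟨f, rfl⟩ := Submodule.Quotient.mk_surjective _ x
        rw [Submodule.mapQ_apply, Submodule.Quotient.mk_eq_zero] at hx
        rw [Submodule.Quotient.mk_eq_zero]
        simp only [LinearMap.mem_ker, Module.Dual.eval_apply, LinearMap.dualMap_apply,
          LinearMap.comp_apply, hQ] at hx ⊢
        exact hx
      · intro y
        obtain ⟨g, rfl⟩ := Submodule.Quotient.mk_surjective _ y
        refine ⟨Submodule.Quotient.mk ((g vhat) • f₀), ?_⟩
        rw [Submodule.mapQ_apply, Submodule.Quotient.eq]
        simp [LinearMap.mem_ker, Module.Dual.eval_apply, hQ, hf₀]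
  · constructor
    · rintro rfl
      rw [one_zsmul] at hQ
      rw [hQ]; exact hv
    · intro hp
      rcases hp.2 c v hQ with h1 | h1
      · exact h1
      · omega
end

section
/- Let k be a field, M̂ an additive abelian group, M ⊆ M̂ a subgroup, Ŝ ⊆ M̂ a submonoid, and S = Ŝ ∩ M (a submonoid of M). Then the ring homomorphism of monoid algebras k[S] → k[Ŝ] induced by the inclusion of monoids S ⊆ Ŝ induces a surjective map on prime spectra: every prime ideal of k[S] is the contraction of a prime ideal of k[Ŝ]. -/
/-! The monoid `S = Ŝ ⊓ M` is saturated in `Ŝ`: if `s + t ∈ M` with `s ∈ M` then `t ∈ M`, since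
`M` is a group. Hence discarding the monomials of `k[Ŝ]` outside `S` is a `k[S]`-linear
retraction of `k[S] → k[Ŝ]`: `k[S]` is the degree-zero part of `k[Ŝ]` for the grading by
`M̂ / M`. A linear retraction makes the extension pure, `p k[Ŝ] ∩ k[S] = p` for every ideal
`p`, and for a prime `p` this says exactly that `p` is the contraction of a prime of `k[Ŝ]`. -/

open scoped AddMonoidAlgebra

namespace Ideal

theorem comap_map_eq_self_of_retraction {A B : Type*} [CommSemiring A] [CommSemiring B]
    {f : A →+* B} (π : B →+ A) (hπ : ∀ a b, π (f a * b) = a * π b) (hπ_one : π 1 = 1)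
    (I : Ideal A) : (I.map f).comap f = I := by
  let := f.toAlgebra
  let πA : B →ₗ[A] A := { π with map_smul' := hπ }
  refine le_antisymm (fun a ha => ?_) le_comap_map
  have ha' : algebraMap A B a ∈ I • (⊤ : Submodule A B) := by
    rw [smul_top_eq_map]; exact ha
  have hπa : πA (f a) ∈ I :=
    Submodule.smul_induction_on ha'
      (fun r hr b _ => by rw [map_smul]; exact I.mul_mem_right _ hr)
      (fun x y hx hy => by rw [map_add]; exact add_mem hx hy)
  have hπf : πA (f a) = a := by
    change π (f a) = a
    rw [← mul_one (f a), hπ, hπ_one, mul_one]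
  rwa [hπf] at hπa

end Ideal

namespace AddMonoidAlgebra

variable {R N P : Type*} [Semiring R]

theorem comapDomain_single_of_notMem_range {f : N → P} {p : P} (hp : p ∉ Set.range f)
    (hf : Function.Injective f) (c : R) : comapDomain f hf (single p c) = 0 := by
  ext
  simp [*]

variable [AddMonoid N] [AddMonoid P] {f : N →+ P} (hf : Function.Injective f)

theorem comapDomain_one : comapDomain f hf (1 : R[P]) = 1 := by
  rw [one_def, ← map_zero f, comapDomain_single_map, one_def]

theorem comapDomain_mapDomain_mul (hsat : ∀ n p, f n + p ∈ Set.range f → p ∈ Set.range f)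
    (r : R[N]) (b : R[P]) :
    comapDomain f hf (mapDomain f r * b) = r * comapDomain f hf b := by
  induction r using induction_linear with
  | zero => rw [mapDomain_zero, zero_mul, comapDomain_zero, zero_mul]
  | add r r' hr hr' => rw [mapDomain_add, add_mul, comapDomain_add, hr, hr', add_mul]
  | single n c =>
    induction b using induction_linear with
    | zero => rw [mul_zero, comapDomain_zero, mul_zero]
    | add b b' hb hb' => rw [mul_add, comapDomain_add, comapDomain_add, hb, hb', mul_add]
    | single p d =>
      rw [mapDomain_single, single_mul_single]
      by_cases hp : p ∈ Set.range f
      · obtain ⟨m, rfl⟩ := hp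
        rw [← map_add, comapDomain_single_map, comapDomain_single_map, single_mul_single]
      · rw [comapDomain_single_of_notMem_range hp, comapDomain_single_of_notMem_range
          (mt (hsat n p) hp), mul_zero]

end AddMonoidAlgebra

/-- Let `k` be a field, `M ⊆ M̂` a subgroup of an abelian group, `Ŝ ⊆ M̂` a submonoid and
`S = Ŝ ∩ M`. Then the map of monoid algebras `k[S] → k[Ŝ]` induced by the inclusion is
surjective on prime spectra: every prime of `k[S]` is a contraction of a prime of `k[Ŝ]`. -/
theorem monoidAlgebra_inclusion_spec_surjective {k : Type*} [Field k]
    {Mhat : Type*} [AddCommGroup Mhat] (M : AddSubgroup Mhat) (Shat : AddSubmonoid Mhat) :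
    ∀ p : Ideal (AddMonoidAlgebra k ↥(Shat ⊓ M.toAddSubmonoid)), p.IsPrime →
      ∃ q : Ideal (AddMonoidAlgebra k ↥Shat), q.IsPrime ∧
        Ideal.comap (AddMonoidAlgebra.mapDomainRingHom k
          (AddSubmonoid.inclusion (inf_le_left : Shat ⊓ M.toAddSubmonoid ≤ Shat))) q = p := by
  intro p hp
  set ι := AddSubmonoid.inclusion (inf_le_left : Shat ⊓ M.toAddSubmonoid ≤ Shat)
  have hι : Function.Injective ι := AddSubmonoid.inclusion_injective _
  have hsat : ∀ n t, ι n + t ∈ Set.range ι → t ∈ Set.range ι := by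
    rintro n t ⟨m, hm⟩
    refine ⟨⟨t, t.2, (M.add_mem_cancel_left n.2.2).mp ?_⟩, rfl⟩
    have hm' : (m : Mhat) = n + t := congrArg Subtype.val hm
    exact hm' ▸ m.2.2
  exact (Ideal.comap_map_eq_self_iff_of_isPrime p).mp <|
    Ideal.comap_map_eq_self_of_retraction (AddMonoidAlgebra.comapDomainAddMonoidHom ι hι)
      (AddMonoidAlgebra.comapDomain_mapDomain_mul hι hsat) (AddMonoidAlgebra.comapDomain_one hι) p
end

section
/- Let W be an additive abelian group and A a commutative ring with a W-grading A = ⊕_{w∈W} A_w. Let w ∈ W and let s ∈ A be a unit such that s ∈ A_w and s⁻¹ ∈ A_{−w}. Then for every integer n, the component A_{n•w} equals {s^n · a : a ∈ A_0}, where s^n is the n-th power of s as a unit of A (allowing negative n). -/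
namespace SetLike

variable {ι R σ : Type*} [AddGroup ι] [Monoid R] [SetLike σ R] (A : ι → σ) [GradedMonoid A]

theorem units_zpow_mem_graded {i : ι} {u : Rˣ} (hu : (u : R) ∈ A i)
    (hu' : ((u⁻¹ : Rˣ) : R) ∈ A (-i)) (n : ℤ) : ((u ^ n : Rˣ) : R) ∈ A (n • i) := by
  induction n using Int.induction_on with
  | zero => simpa using one_mem_graded A
  | succ k ih =>
    rw [zpow_add_one, add_zsmul, one_zsmul, Units.val_mul]
    exact mul_mem_graded ih hu
  | pred k ih =>
    rw [zpow_sub_one, sub_zsmul, one_zsmul, Units.val_mul]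
    exact mul_mem_graded ih hu'

theorem mem_graded_add_iff_exists_units_mul {i j : ι} {u : Rˣ} (hu : (u : R) ∈ A i)
    (hu' : ((u⁻¹ : Rˣ) : R) ∈ A (-i)) {x : R} :
    x ∈ A (i + j) ↔ ∃ a ∈ A j, x = u * a := by
  constructor
  · intro hx
    refine ⟨((u⁻¹ : Rˣ) : R) * x, ?_, by rw [Units.mul_inv_cancel_left]⟩
    simpa using mul_mem_graded hu' hx
  · rintro ⟨a, ha, rfl⟩
    exact mul_mem_graded hu ha

end SetLike

/-- If `s` is a unit of a `W`-graded commutative ring with `s ∈ A_w` and `s⁻¹ ∈ A_{-w}`,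
then for every integer `n` the component `A_{n•w}` is `s^n · A_0`. -/
theorem graded_component_of_homogeneous_unit {W A : Type*} [AddCommGroup W] [DecidableEq W]
    [CommRing A] (𝒜 : W → AddSubgroup A) [GradedRing 𝒜] (w : W) (s : Aˣ)
    (hs : (s : A) ∈ 𝒜 w) (hs' : ((s⁻¹ : Aˣ) : A) ∈ 𝒜 (-w)) :
    ∀ n : ℤ, (𝒜 (n • w) : Set A) = {x : A | ∃ a ∈ 𝒜 0, x = ((s ^ n : Aˣ) : A) * a} := by
  intro n
  have hpow := SetLike.units_zpow_mem_graded 𝒜 hs hs' n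
  have hpow_inv : (((s ^ n)⁻¹ : Aˣ) : A) ∈ 𝒜 (-(n • w)) := by
    simpa [← zpow_neg, neg_smul] using SetLike.units_zpow_mem_graded 𝒜 hs hs' (-n)
  ext x
  simpa using SetLike.mem_graded_add_iff_exists_units_mul 𝒜 (j := 0) hpow hpow_inv
end

section
/- Let W be an additive abelian group and A a commutative ring with a W-grading A = ⊕_{w∈W} A_w. Let w ∈ W be such that n ↦ n•w is injective from ℤ to W, and let s ∈ A be a unit with s ∈ A_w and s⁻¹ ∈ A_{−w}. Let A^{(w)} ⊆ A be the subring consisting of all finite sums of elements of the components A_{n•w}, n ∈ ℤ (the Veronese subring of A with respect to ℤ·w). Then there is a ring isomorphism from the Laurent polynomial ring A_0[T, T^{−1}] onto A^{(w)} sending T to s and restricting to the identity on A_0. -/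
open scoped LaurentPolynomial

/-!
Evaluation at `T = s` maps `a T ^ n` (with `a ∈ A_0`) to `a s ^ n ∈ A_{n•w}`. As `n ↦ n • w` is
injective, distinct monomials land in distinct graded pieces, so projecting the image of `p` to
`A_{n•w}` recovers `p_n s ^ n`; since `s` is a unit this forces injectivity. The image is the
Veronese subring because every `x ∈ A_{n•w}` is the image of `(x s⁻ⁿ) T ^ n`, with `x s⁻ⁿ ∈ A_0`.
-/

section GradedMonoid

variable {W A σ : Type*} [AddGroup W] [Monoid A] [SetLike σ A]
  (𝒜 : W → σ) [SetLike.GradedMonoid 𝒜] {w : W} {s : Aˣ}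

theorem Units.zpow_mem_graded (hs : (s : A) ∈ 𝒜 w) (hs' : ((s⁻¹ : Aˣ) : A) ∈ 𝒜 (-w)) (n : ℤ) :
    ((s ^ n : Aˣ) : A) ∈ 𝒜 (n • w) := by
  cases n with
  | ofNat m => simpa using SetLike.pow_mem_graded m hs
  | negSucc m =>
    rw [zpow_negSucc, ← inv_pow, negSucc_zsmul, ← neg_nsmul, Units.val_pow_eq_pow_val]
    exact SetLike.pow_mem_graded _ hs'

theorem Units.coe_mul_zpow_mem_graded (hs : (s : A) ∈ 𝒜 w) (hs' : ((s⁻¹ : Aˣ) : A) ∈ 𝒜 (-w))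
    (a : 𝒜 0) (n : ℤ) : (a : A) * ((s ^ n : Aˣ) : A) ∈ 𝒜 (n • w) := by
  simpa using SetLike.mul_mem_graded a.2 (Units.zpow_mem_graded 𝒜 hs hs' n)

end GradedMonoid

theorem LaurentPolynomial.eval₂_eq_sum {R S : Type*} [CommSemiring R] [CommSemiring S]
    (f : R →+* S) (x : Sˣ) (p : R[T;T⁻¹]) :
    eval₂ f x p = p.coeff.sum fun n a => f a * ((x ^ n : Sˣ) : S) := by
  conv_lhs => rw [← p.sum_coeff_single]
  simp [Finsupp.sum, map_sum, single_eq_C_mul_T]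

namespace GradedRing

open LaurentPolynomial

variable {W A : Type*} [AddCommGroup W] [DecidableEq W] [CommRing A]
  (𝒜 : W → AddSubgroup A) [GradedRing 𝒜] {w : W} {s : Aˣ}

theorem proj_zsmul_eval₂ (hw : Function.Injective fun n : ℤ => n • w) (hs : (s : A) ∈ 𝒜 w)
    (hs' : ((s⁻¹ : Aˣ) : A) ∈ 𝒜 (-w)) (p : (𝒜 0)[T;T⁻¹]) (n : ℤ) :
    proj 𝒜 (n • w) (eval₂ (algebraMap (𝒜 0) A) s p) = p.coeff n * ((s ^ n : Aˣ) : A) := by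
  rw [eval₂_eq_sum, Finsupp.sum, map_sum, Finset.sum_eq_single n]
  · exact DirectSum.decompose_of_mem_same 𝒜 (Units.coe_mul_zpow_mem_graded 𝒜 hs hs' _ n)
  · exact fun m _ hmn =>
      DirectSum.decompose_of_mem_ne 𝒜 (Units.coe_mul_zpow_mem_graded 𝒜 hs hs' _ m) (hw.ne hmn)
  · intro hn
    simp [Finsupp.notMem_support_iff.1 hn]

theorem injective_eval₂_of_homogeneous_unit (hw : Function.Injective fun n : ℤ => n • w)
    (hs : (s : A) ∈ 𝒜 w) (hs' : ((s⁻¹ : Aˣ) : A) ∈ 𝒜 (-w)) :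
    Function.Injective (eval₂ (algebraMap (𝒜 0) A) s) := by
  refine (injective_iff_map_eq_zero _).2 fun p hp => ?_
  ext n : 2
  have hcoeff := proj_zsmul_eval₂ 𝒜 hw hs hs' p n
  rw [hp, map_zero, eq_comm, Units.mul_left_eq_zero] at hcoeff
  exact_mod_cast hcoeff

theorem range_eval₂_eq_closure (hs : (s : A) ∈ 𝒜 w) (hs' : ((s⁻¹ : Aˣ) : A) ∈ 𝒜 (-w)) :
    (eval₂ (algebraMap (𝒜 0) A) s).range.toAddSubmonoid =
      AddSubmonoid.closure (⋃ n : ℤ, (𝒜 (n • w) : Set A)) := by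
  refine le_antisymm ?_ ?_
  · rintro _ ⟨p, rfl⟩
    rw [eval₂_eq_sum]
    exact AddSubmonoid.sum_mem _ fun n _ => AddSubmonoid.subset_closure
      (Set.mem_iUnion.2 ⟨n, Units.coe_mul_zpow_mem_graded 𝒜 hs hs' _ n⟩)
  · refine AddSubmonoid.closure_le.2 (Set.iUnion_subset fun n a ha => ?_)
    have ha₀ : a * ((s ^ (-n) : Aˣ) : A) ∈ 𝒜 0 := by
      simpa using SetLike.mul_mem_graded ha (Units.zpow_mem_graded 𝒜 hs hs' (-n))
    refine ⟨C ⟨_, ha₀⟩ * T n, ?_⟩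
    simp [mul_assoc, ← Units.val_mul]

end GradedRing

/-- If `s` is a unit of a `W`-graded commutative ring with `s ∈ A_w`, `s⁻¹ ∈ A_{-w}` and
`n ↦ n•w` injective, then the Veronese subring `A^{(w)}` (the finite sums of elements of
the components `A_{n•w}`, `n ∈ ℤ`) is isomorphic to the Laurent polynomial ring
`A_0[T,T⁻¹]` via `T ↦ s`, fixing `A_0`. -/
theorem veronese_of_homogeneous_unit {W A : Type*} [AddCommGroup W] [DecidableEq W]
    [CommRing A] (𝒜 : W → AddSubgroup A) [GradedRing 𝒜] (w : W)
    (hw : Function.Injective fun n : ℤ => n • w)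
    (s : Aˣ) (hs : (s : A) ∈ 𝒜 w) (hs' : ((s⁻¹ : Aˣ) : A) ∈ 𝒜 (-w)) :
    ∃ Ver : Subring A,
      (Ver : Set A) = ↑(AddSubmonoid.closure (⋃ n : ℤ, (𝒜 (n • w) : Set A))) ∧
      ∃ e : (↥(𝒜 0))[T;T⁻¹] ≃+* ↥Ver,
        ((e (LaurentPolynomial.T 1) : ↥Ver) : A) = (s : A) ∧
        ∀ a : ↥(𝒜 0), ((e (LaurentPolynomial.C a) : ↥Ver) : A) = (a : A) := by
  set φ := LaurentPolynomial.eval₂ (algebraMap (𝒜 0) A) s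
  refine ⟨φ.range, congrArg SetLike.coe (GradedRing.range_eval₂_eq_closure 𝒜 hs hs'),
    RingEquiv.ofBijective φ.rangeRestrict
      ⟨(GradedRing.injective_eval₂_of_homogeneous_unit 𝒜 hw hs hs').codRestrict _,
        φ.rangeRestrict_surjective⟩,
    ?_, fun a => ?_⟩
  · exact (LaurentPolynomial.eval₂_T _ _ 1).trans (by rw [zpow_one])
  · exact LaurentPolynomial.eval₂_C _ _ a
end
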